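/- arXiv:2006.03553 — 2 statements merged into one kernel-verified Lean document; each statement's English description precedes it below -/
import Mathlib

section
/- If each agent k acts greedily with respect to its factored function q^{k,⋆} (i.e., chooses a^k ∈ argmax_{a^k} q^{k,⋆}(s,a^k), with ties broken to jointly maximize q†), then the resulting joint deterministic policy is team optimal: q†(s, argmax_{a^1} q^{1,⋆}(s,·), ..., argmax_{a^K} q^{K,⋆}(s,·)) = max_ā q†(s,ā) for all s. -/
/-!
The team optimal joint action `π s` is itself individually greedy: a unilateral deviation of
agent `k` is again a joint action, so it cannot beat `π s`. Hence `π s` is among the individually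
greedy selections over which ties are broken, and the tie-breaking rule makes `g s` at least as
good as `π s`.
-/

open Function

section

variable {α : Type*} [ConditionallyCompleteLattice α]

theorem apply_eq_ciSup_iff_forall_le {ι : Type*} [Finite ι] {f : ι → α} {x : ι} :
    f x = ⨆ i, f i ↔ ∀ i, f i ≤ f x := by
  have : Nonempty ι := ⟨x⟩
  exact ⟨fun hx i => hx ▸ Finite.le_ciSup f i,
    fun hx => le_antisymm (Finite.le_ciSup f x) (ciSup_le hx)⟩

theorem ciSup_update_eq_of_forall_le {ι : Type*} {A : ι → Type*} [DecidableEq ι]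
    {f : (∀ i, A i) → α} {x : ∀ i, A i} (hx : ∀ y, f y ≤ f x) (k : ι) :
    ⨆ a : A k, f (update x k a) = f x := by
  have : Nonempty (A k) := ⟨x k⟩
  have hbdd : BddAbove (Set.range fun a : A k => f (update x k a)) :=
    ⟨f x, Set.forall_mem_range.2 fun a => hx _⟩
  exact le_antisymm (ciSup_le fun a => hx _)
    (le_ciSup_of_le hbdd (x k) (by rw [update_eq_self]))

end

theorem stmt2_general
    {S : Type}
    {K : ℕ} {A : Fin K → Type} [∀ k, Fintype (A k)]
    (qd : S → ((k : Fin K) → A k) → ℝ)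
    (π : S → (k : Fin K) → A k)
    (hopt : ∀ s, qd s (π s) = ⨆ aj : (k : Fin K) → A k, qd s aj)
    (qstar : (k : Fin K) → S → A k → ℝ)
    (hdef : ∀ k s a, qstar k s a = qd s (Function.update (π s) k a))
    (g : S → (k : Fin K) → A k)
    -- ties are broken so as to jointly maximize q† among individually greedy selections
    (hties : ∀ s (h : (k : Fin K) → A k),
      (∀ k, qstar k s (h k) = ⨆ a : A k, qstar k s a) → qd s h ≤ qd s (g s)) :
    ∀ s, qd s (g s) = ⨆ aj : (k : Fin K) → A k, qd s aj := by
  intro s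
  have π_max : ∀ aj, qd s aj ≤ qd s (π s) := apply_eq_ciSup_iff_forall_le.1 (hopt s)
  have π_greedy : ∀ k, qstar k s (π s k) = ⨆ a : A k, qstar k s a := fun k => by
    simp only [hdef, update_eq_self, ciSup_update_eq_of_forall_le π_max]
  exact apply_eq_ciSup_iff_forall_le.2 fun aj => (π_max aj).trans (hties s (π s) π_greedy)

/-- If each agent k acts greedily with respect to its factored function
q^{k,⋆}, with ties broken to jointly maximize q†, then the resulting joint deterministic
policy is team optimal. -/
theorem stmt2
    {S : Type} [Fintype S] [Nonempty S]
    {K : ℕ} {A : Fin K → Type} [∀ k, Fintype (A k)] [∀ k, Nonempty (A k)]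
    (qd : S → ((k : Fin K) → A k) → ℝ)
    (π : S → (k : Fin K) → A k)
    (hopt : ∀ s, qd s (π s) = ⨆ aj : (k : Fin K) → A k, qd s aj)
    (qstar : (k : Fin K) → S → A k → ℝ)
    (hdef : ∀ k s a, qstar k s a = qd s (Function.update (π s) k a))
    (g : S → (k : Fin K) → A k)
    -- g k is a greedy action for q^{k,⋆} at every state
    (hgreedy : ∀ s k, qstar k s (g s k) = ⨆ a : A k, qstar k s a)
    -- ties are broken so as to jointly maximize q† among individually greedy selections
    (hties : ∀ s (h : (k : Fin K) → A k),
      (∀ k, qstar k s (h k) = ⨆ a : A k, qstar k s a) → qd s h ≤ qd s (g s)) :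
    ∀ s, qd s (g s) = ⨆ aj : (k : Fin K) → A k, qd s aj :=
  stmt2_general qd π hopt qstar hdef g hties
end

section
/- For any q^k bounded above by q_U ≥ r_max/(1−γ), the sequence B_I^n q^k is pointwise nondecreasing, uniformly bounded above by q_U, and converges pointwise; its limit q̄^k satisfies q̄^k(s,a^k) ≥ max_{a^{-k}} q†(s,a^k,a^{-k}) for all s,a^k. -/
/-!
Since `B_I q ≥ q`, the iterates increase, and the bound `q_U` is preserved because
`r + γ q_U ≤ r_max + γ q_U ≤ q_U`; being bounded, they converge to their supremum. For the lower
bound write `D(s, a^k) = max_{a^{-k}} q†(s, a^k, a^{-k})`, so that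
`max_{a'} q†(s', a') ≤ max_{a^k} D(s', a^k)`. If `q ≥ D - ε`, the Bellman equation of `q†` then
gives `B_I q ≥ D - γ ε`. Starting from some finite slack `ε`, the iterates satisfy
`B_I^n q ≥ D - γ^n ε`, so their limit is at least `D`.
-/

open scoped Classical

section

variable {S : Type} [Fintype S] [Nonempty S]
  {K : ℕ} {A : Fin K → Type} [∀ k, Fintype (A k)] [∀ k, Nonempty (A k)]

/-- The optimistic-exact team Bellman operator B_E: the other agents play the
greedy actions prescribed by the selector `g`. -/
noncomputable def BE (r : S → ((k : Fin K) → A k) → ℝ)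
    (P : S → ((k : Fin K) → A k) → S → ℝ) (γ : ℝ)
    (g : ((k : Fin K) → S → A k → ℝ) → S → ((k : Fin K) → A k))
    (Q : (k : Fin K) → S → A k → ℝ) : (k : Fin K) → S → A k → ℝ :=
  fun k s a =>
    r s (Function.update (g Q s) k a)
      + γ * ∑ s', (P s (Function.update (g Q s) k a) s' * (⨆ a' : A k, Q k s' a'))

/-- The individual-optimism operator B_I. -/
noncomputable def BI (r : S → ((k : Fin K) → A k) → ℝ)
    (P : S → ((k : Fin K) → A k) → S → ℝ) (γ : ℝ)
    (Q : (k : Fin K) → S → A k → ℝ) : (k : Fin K) → S → A k → ℝ :=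
  fun k s a =>
    max (Q k s a)
      (⨆ b : (n : Fin K) → A n,
        (r s (Function.update b k a)
          + γ * ∑ s', (P s (Function.update b k a) s' * (⨆ a' : A k, Q k s' a'))))

/-- Apply a finite sequence of operators (`true` = B_E, `false` = B_I). -/
noncomputable def applySeq (r : S → ((k : Fin K) → A k) → ℝ)
    (P : S → ((k : Fin K) → A k) → S → ℝ) (γ : ℝ)
    (g : ((k : Fin K) → S → A k → ℝ) → S → ((k : Fin K) → A k))
    (ops : List Bool) (Q : (k : Fin K) → S → A k → ℝ) :
    (k : Fin K) → S → A k → ℝ :=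
  ops.foldr (fun b acc => if b then BE r P γ g acc else BI r P γ acc) Q

open Finset Filter Topology Function

lemma sum_mul_le_sum_mul_add {ι : Type*} [Fintype ι] {p f g : ι → ℝ} {ε : ℝ}
    (hp : ∀ i, 0 ≤ p i) (hp1 : ∑ i, p i = 1) (h : ∀ i, f i ≤ g i + ε) :
    ∑ i, p i * f i ≤ ∑ i, p i * g i + ε :=
  calc ∑ i, p i * f i ≤ ∑ i, p i * (g i + ε) := by gcongr with i; exacts [hp i, h i]
    _ = ∑ i, p i * g i + ε := by simp only [mul_add, sum_add_distrib, ← sum_mul, hp1, one_mul]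

section MaxOthers

omit [Nonempty S] [∀ k, Nonempty (A k)]

/-- `max_{a^{-k}} q(s, a^k, a^{-k})`, the actions `a^{-k}` being the entries of `b` off `k`. -/
noncomputable def maxOthers (q : S → ((k : Fin K) → A k) → ℝ) (k : Fin K) (s : S) (a : A k) :
    ℝ :=
  ⨆ b : (n : Fin K) → A n, q s (update b k a)

omit [Fintype S] in
lemma le_maxOthers (q : S → ((k : Fin K) → A k) → ℝ) (k : Fin K) (s : S)
    (aj : (n : Fin K) → A n) : q s aj ≤ maxOthers q k s (aj k) :=
  le_ciSup_of_le (Finite.bddAbove_range _) aj (by rw [update_eq_self])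

lemma exists_maxOthers_sub_le (q : S → ((k : Fin K) → A k) → ℝ)
    (Q : (k : Fin K) → S → A k → ℝ) : ∃ ε, ∀ k s a, maxOthers q k s a - ε ≤ Q k s a := by
  obtain ⟨ε, hε⟩ := Finite.bddAbove_range fun x : Σ k, S × A k =>
    maxOthers q x.1 x.2.1 x.2.2 - Q x.1 x.2.1 x.2.2
  exact ⟨ε, fun k s a => sub_le_comm.1 (hε ⟨⟨k, s, a⟩, rfl⟩)⟩

end MaxOthers

section Iteration

omit [Nonempty S]

variable {r : S → ((k : Fin K) → A k) → ℝ} {P : S → ((k : Fin K) → A k) → S → ℝ} {γ : ℝ}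

omit [∀ k, Fintype (A k)] [∀ k, Nonempty (A k)] in
lemma le_BI (Q : (k : Fin K) → S → A k → ℝ) : Q ≤ BI r P γ Q :=
  fun _ _ _ => le_max_left _ _

omit [∀ k, Fintype (A k)] [∀ k, Nonempty (A k)] in
lemma monotone_iterate_BI (Q : (k : Fin K) → S → A k → ℝ) :
    Monotone fun n => (BI r P γ)^[n] Q :=
  fun _ _ h => monotone_iterate_of_id_le le_BI h Q

omit [∀ k, Nonempty (A k)] in
lemma backup_le_BI (Q : (k : Fin K) → S → A k → ℝ) (k : Fin K) (s : S) (a : A k)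
    (b : (n : Fin K) → A n) :
    r s (update b k a) + γ * ∑ s', P s (update b k a) s' * ⨆ a', Q k s' a' ≤ BI r P γ Q k s a :=
  le_max_of_le_right <| le_ciSup (Finite.bddAbove_range fun b : (n : Fin K) → A n =>
    r s (update b k a) + γ * ∑ s', P s (update b k a) s' * ⨆ a', Q k s' a') b

variable (hγ : 0 ≤ γ) (hP : ∀ s aj s', 0 ≤ P s aj s') (hP1 : ∀ s aj, ∑ s', P s aj s' = 1)
include hγ hP hP1

omit [∀ k, Fintype (A k)] in
lemma BI_le {qU : ℝ} (hr : ∀ s aj, r s aj + γ * qU ≤ qU) {Q : (k : Fin K) → S → A k → ℝ}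
    (hQ : ∀ k s a, Q k s a ≤ qU) (k : Fin K) (s : S) (a : A k) : BI r P γ Q k s a ≤ qU := by
  refine max_le (hQ k s a) (ciSup_le fun b => ?_)
  have hV : ∑ s', P s (update b k a) s' * ⨆ a', Q k s' a' ≤ qU := by
    simpa using sum_mul_le_sum_mul_add (g := 0) (hP s _) (hP1 s _)
      fun s' => by simpa using ciSup_le (hQ k s')
  linarith [hr s (update b k a), mul_le_mul_of_nonneg_left hV hγ]

omit [∀ k, Fintype (A k)] in
lemma iterate_BI_le {qU : ℝ} (hr : ∀ s aj, r s aj + γ * qU ≤ qU)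
    {Q : (k : Fin K) → S → A k → ℝ} (hQ : ∀ k s a, Q k s a ≤ qU) (n : ℕ) :
    ∀ k s a, (BI r P γ)^[n] Q k s a ≤ qU := by
  induction n with
  | zero => exact hQ
  | succ n ih => rw [iterate_succ_apply']; exact BI_le hγ hP hP1 hr ih

variable {qd : S → ((k : Fin K) → A k) → ℝ}
  (hqd : ∀ s aj, qd s aj = r s aj + γ * ∑ s', P s aj s' * ⨆ aj', qd s' aj')
include hqd

lemma maxOthers_sub_mul_le_BI {Q : (k : Fin K) → S → A k → ℝ} {ε : ℝ}
    (hQ : ∀ k s a, maxOthers qd k s a - ε ≤ Q k s a) (k : Fin K) (s : S) (a : A k) :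
    maxOthers qd k s a - γ * ε ≤ BI r P γ Q k s a := by
  have hV : ∀ s', ⨆ aj, qd s' aj ≤ (⨆ a', Q k s' a') + ε := fun s' =>
    ciSup_le fun aj =>
      calc qd s' aj ≤ maxOthers qd k s' (aj k) := le_maxOthers qd k s' aj
        _ ≤ Q k s' (aj k) + ε := by linarith [hQ k s' (aj k)]
        _ ≤ (⨆ a', Q k s' a') + ε := by gcongr; exact le_ciSup (Finite.bddAbove_range _) _
  suffices maxOthers qd k s a ≤ BI r P γ Q k s a + γ * ε by linarith
  refine ciSup_le fun b => ?_
  calc qd s (update b k a)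
      = r s (update b k a) + γ * ∑ s', P s (update b k a) s' * ⨆ aj, qd s' aj := hqd _ _
    _ ≤ r s (update b k a) + γ * (∑ s', P s (update b k a) s' * (⨆ a', Q k s' a') + ε) := by
        gcongr; exact sum_mul_le_sum_mul_add (hP s _) (hP1 s _) hV
    _ ≤ BI r P γ Q k s a + γ * ε := by
        rw [mul_add, ← add_assoc]; gcongr; exact backup_le_BI Q k s a b

lemma maxOthers_sub_pow_mul_le_iterate_BI {Q : (k : Fin K) → S → A k → ℝ} {ε : ℝ}
    (hQ : ∀ k s a, maxOthers qd k s a - ε ≤ Q k s a) (n : ℕ) :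
    ∀ k s a, maxOthers qd k s a - γ ^ n * ε ≤ (BI r P γ)^[n] Q k s a := by
  induction n with
  | zero => simpa using hQ
  | succ n ih =>
    rw [iterate_succ_apply', pow_succ', mul_assoc]
    exact maxOthers_sub_mul_le_BI hγ hP hP1 hqd ih

end Iteration

/-- For any q^k bounded above by q_U ≥ r_max/(1−γ), the sequence B_I^n q^k
is pointwise nondecreasing, uniformly bounded above by q_U, and converges pointwise; its
limit q̄^k satisfies q̄^k(s,a^k) ≥ max_{a^{-k}} q†(s,a^k,a^{-k}) for all s, a^k. -/
theorem stmt17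
    (r : S → ((k : Fin K) → A k) → ℝ)
    (P : S → ((k : Fin K) → A k) → S → ℝ)
    (γ : ℝ) (hγ0 : 0 ≤ γ) (hγ1 : γ < 1)
    (hPnn : ∀ s aj s', 0 ≤ P s aj s') (hPsum : ∀ s aj, ∑ s', P s aj s' = 1)
    (rmax : ℝ) (hrmax : ∀ s aj, r s aj ≤ rmax)
    (qd : S → ((k : Fin K) → A k) → ℝ)
    (hBellman : ∀ s aj, qd s aj
      = r s aj + γ * ∑ s', (P s aj s' * (⨆ aj' : (k : Fin K) → A k, qd s' aj')))
    (qU : ℝ) (hqU : rmax ≤ qU * (1 - γ))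
    (Q : (k : Fin K) → S → A k → ℝ)
    (hQle : ∀ (k : Fin K) (s : S) (a : A k), Q k s a ≤ qU) :
    -- pointwise nondecreasing
    (∀ (k : Fin K) (s : S) (a : A k),
      Monotone fun n : ℕ => (BI r P γ)^[n] Q k s a) ∧
    -- uniformly bounded above by q_U
    (∀ (n : ℕ) (k : Fin K) (s : S) (a : A k), (BI r P γ)^[n] Q k s a ≤ qU) ∧
    -- pointwise convergence to a limit q̄ with q̄ ≥ max_{a^{-k}} q†(s,a^k,a^{-k})
    (∃ Qbar : (k : Fin K) → S → A k → ℝ,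
      (∀ (k : Fin K) (s : S) (a : A k),
        Filter.Tendsto (fun n : ℕ => (BI r P γ)^[n] Q k s a)
          Filter.atTop (nhds (Qbar k s a))) ∧
      ∀ (k : Fin K) (s : S) (a : A k),
        (⨆ b : (n : Fin K) → A n, qd s (Function.update b k a)) ≤ Qbar k s a) := by
  have hr : ∀ s aj, r s aj + γ * qU ≤ qU := fun s aj => by linarith [hrmax s aj]
  have hbound := iterate_BI_le hγ0 hPnn hPsum hr hQle
  have hmono (k : Fin K) (s : S) (a : A k) : Monotone fun n => (BI r P γ)^[n] Q k s a :=
    fun _ _ h => monotone_iterate_BI Q h k s a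
  have hconv (k : Fin K) (s : S) (a : A k) : Tendsto (fun n => (BI r P γ)^[n] Q k s a) atTop
      (𝓝 (⨆ n, (BI r P γ)^[n] Q k s a)) :=
    tendsto_atTop_ciSup (hmono k s a) ⟨qU, by rintro _ ⟨n, rfl⟩; exact hbound n k s a⟩
  obtain ⟨ε, hε⟩ := exists_maxOthers_sub_le qd Q
  refine ⟨hmono, hbound, _, hconv, fun k s a => ?_⟩
  have hlow : Tendsto (fun n : ℕ => maxOthers qd k s a - γ ^ n * ε) atTop
      (𝓝 (maxOthers qd k s a)) := by
    simpa using tendsto_const_nhds.sub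
      ((tendsto_pow_atTop_nhds_zero_of_lt_one hγ0 hγ1).mul_const ε)
  exact le_of_tendsto_of_tendsto' hlow (hconv k s a)
    (maxOthers_sub_pow_mul_le_iterate_BI hγ0 hPnn hPsum hBellman hε · k s a)

end
end
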